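/- arXiv:math/0201318 — 4 statements merged into one kernel-verified Lean document; each statement's English description precedes it below -/
import Mathlib

section
/- Let F = (F_1, …, F_r) be a holomorphic vector-valued modular form of weight 0 with respect to a representation ρ : SL(2,ℤ) → GL(r,ℂ), such that all Fourier coefficients a_i(n) of every component F_i are non-negative real numbers. Then F is constant, i.e. each component function F_i is a constant function on ℍ (equivalently, a_i(n) = 0 for all n ≥ 1 and all i). -/
/-!
On the imaginary axis `F_i(iy) = ∑ a_i(n) e^{-2πny/N_i}` is real, nonnegative and decreasing in
`y`, so `F(S • τ) = ρ(S) F(τ)` bounds `F_i(it)` for `0 < t ≤ 1`; letting `t → 0` shows that the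
coefficients are summable. The `q`-expansion then converges on the closed unit disc, so
`F_i(τ) → L_i = ∑ a_i(n)` as `τ → 0`. As `F_i` has period `N_i` and `S • (τ + mN_i) → 0`,
`F_i(τ) = F_i(S • S • (τ + mN_i)) = ∑_j ρ(S)_{ij} F_j(S • (τ + mN_i)) → (ρ(S) L)_i`, so `F` is
constant, and comparing the values at `i` and `2i` kills every coefficient with `n ≥ 1`.
-/

open UpperHalfPlane Complex Matrix
open scoped Manifold Real

open Filter Topology Function.Periodic

section NonnegCoefficients

variable {a : ℕ → ℝ}

lemma norm_le_of_hasSum_ofReal_mul_pow (ha : ∀ n, 0 ≤ a n) {w s : ℂ} {x u : ℝ} (hwx : ‖w‖ ≤ x)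
    (hs : HasSum (fun n => (a n : ℂ) * w ^ n) s) (hu : HasSum (fun n => a n * x ^ n) u) :
    ‖s‖ ≤ u :=
  hs.norm_le_of_bounded hu fun n => by
    rw [norm_mul, norm_pow, Complex.norm_real, Real.norm_of_nonneg (ha n)]
    exact mul_le_mul_of_nonneg_left (pow_le_pow_left₀ (norm_nonneg w) hwx n) (ha n)

lemma summable_of_eventually_sum_range_mul_pow_le (ha : ∀ n, 0 ≤ a n) {C : ℝ} {α : Type*}
    {l : Filter α} [l.NeBot] {x : α → ℝ} (hx : Tendsto x l (𝓝 1))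
    (hC : ∀ᶠ t in l, ∀ M, ∑ n ∈ Finset.range M, a n * x t ^ n ≤ C) : Summable a := by
  refine summable_of_sum_range_le ha fun M => le_of_tendsto ?_ (hC.mono fun t ht => ht M)
  simpa using (tendsto_finsetSum _ fun n _ => (hx.pow n).const_mul (a n))

lemma eq_zero_of_hasSum_mul_pow_eq (ha : ∀ n, 0 ≤ a n) {x y s : ℝ} (hx : 0 ≤ x) (hxy : x < y)
    (hsx : HasSum (fun n => a n * x ^ n) s) (hsy : HasSum (fun n => a n * y ^ n) s) {n : ℕ}
    (hn : n ≠ 0) : a n = 0 := by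
  have hterm : ∀ n, 0 ≤ a n * (y ^ n - x ^ n) := fun n =>
    mul_nonneg (ha n) (sub_nonneg.2 (pow_le_pow_left₀ hx hxy.le n))
  have hzero : HasSum (fun n => a n * (y ^ n - x ^ n)) 0 := by
    simpa only [mul_sub, sub_self] using hsy.sub hsx
  have hn' := congrFun ((hasSum_zero_iff_of_nonneg hterm).1 hzero) n
  exact (mul_eq_zero.1 hn').resolve_right (sub_pos.2 (pow_lt_pow_left₀ hxy hx hn)).ne'

end NonnegCoefficients

lemma continuousOn_tsum_mul_pow_closedBall {c : ℕ → ℂ} (hc : Summable fun n => ‖c n‖) :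
    ContinuousOn (fun w : ℂ => ∑' n, c n * w ^ n) (Metric.closedBall 0 1) :=
  continuousOn_tsum (fun n => by fun_prop) hc fun n w hw => by
    rw [norm_mul, norm_pow]
    exact mul_le_of_le_one_right (norm_nonneg _) (pow_le_one₀ (norm_nonneg w) (by simpa using hw))

lemma exp_eq_qParam_pow (h : ℝ) (n : ℕ) (z : ℂ) :
    exp (2 * π * Complex.I * n * z / h) = qParam h z ^ n := by
  rw [qParam, ← Complex.exp_nat_mul]
  ring_nf

lemma qParam_I_mul (h y : ℝ) : qParam h (Complex.I * y) = (Real.exp (-2 * π * y / h) : ℝ) := by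
  rw [qParam, Complex.ofReal_exp]
  congr 1
  push_cast
  linear_combination (2 * π * y / h : ℂ) * I_sq

lemma qParam_add_natCast_mul {h : ℝ} (hh : h ≠ 0) (z : ℂ) (m : ℕ) :
    qParam h (z + (m * h : ℝ)) = qParam h z := by
  have hsplit : 2 * π * Complex.I * (z + (m * h : ℝ)) / h
      = 2 * π * Complex.I * z / h + m * (2 * π * Complex.I) := by
    have hh' : (h : ℂ) ≠ 0 := by exact_mod_cast hh
    push_cast
    field_simp
  rw [qParam, qParam, hsplit, Complex.exp_add, Complex.exp_nat_mul_two_pi_mul_I, mul_one]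

def imAxis (y : ℝ) (hy : 0 < y) : ℍ := ⟨Complex.I * y, by simpa using hy⟩

@[simp]
lemma coe_imAxis (y : ℝ) (hy : 0 < y) : (imAxis y hy : ℂ) = Complex.I * y := rfl

@[simp]
lemma im_imAxis (y : ℝ) (hy : 0 < y) : (imAxis y hy).im = y := by
  simp [UpperHalfPlane.im]

lemma imAxis_eq_S_smul (y : ℝ) (hy : 0 < y) :
    imAxis y hy = ModularGroup.S • imAxis y⁻¹ (inv_pos.2 hy) := by
  rw [modular_S_smul]
  ext
  simp [mul_comm]

lemma tendsto_S_smul_vadd_atTop (τ : ℍ) :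
    Tendsto (fun x : ℝ => ModularGroup.S • (x +ᵥ τ)) atTop (comap ((↑) : ℍ → ℂ) (𝓝 0)) := by
  refine tendsto_comap_iff.2 ?_
  have hre : Tendsto (fun x : ℝ => ((x +ᵥ τ : ℍ) : ℂ).re) atTop atTop := by
    simpa only [coe_vadd, add_re, ofReal_re, id] using tendsto_atTop_add_const_right _ _ tendsto_id
  have hcob : Tendsto (fun x : ℝ => ((x +ᵥ τ : ℍ) : ℂ)) atTop (Bornology.cobounded ℂ) :=
    tendsto_norm_atTop_iff_cobounded.1 (tendsto_atTop_mono (fun x => re_le_norm _) hre)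
  have hlim := (tendsto_inv₀_cobounded.comp hcob).neg
  rw [neg_zero] at hlim
  refine hlim.congr fun x => ?_
  rw [Function.comp_apply, Function.comp_apply, modular_S_smul]
  exact inv_neg.symm

lemma modular_S_smul_S_smul (τ : ℍ) : ModularGroup.S • ModularGroup.S • τ = τ := by
  rw [modular_S_smul, modular_S_smul]
  ext
  simp

section QExpansion

variable {F : ℍ → ℂ} {a : ℕ → ℝ} {h : ℝ}

lemma hasSum_re_imAxis (hF : ∀ τ : ℍ, HasSum (fun n => (a n : ℂ) * qParam h τ ^ n) (F τ))
    {y : ℝ} (hy : 0 < y) :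
    HasSum (fun n => a n * Real.exp (-2 * π * y / h) ^ n) (F (imAxis y hy)).re := by
  have hre := Complex.hasSum_re (hF (imAxis y hy))
  simp only [coe_imAxis, qParam_I_mul, ← Complex.ofReal_pow, ← Complex.ofReal_mul,
    Complex.ofReal_re] at hre
  exact hre

lemma norm_le_re_imAxis (ha : ∀ n, 0 ≤ a n)
    (hF : ∀ τ : ℍ, HasSum (fun n => (a n : ℂ) * qParam h τ ^ n) (F τ)) (hh : 0 < h)
    {y : ℝ} (hy : 0 < y) {τ : ℍ} (hyτ : y ≤ τ.im) : ‖F τ‖ ≤ (F (imAxis y hy)).re := by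
  refine norm_le_of_hasSum_ofReal_mul_pow ha ?_ (hF τ) (hasSum_re_imAxis hF hy)
  rw [norm_qParam, Real.exp_le_exp]
  exact div_le_div_of_nonneg_right
    (mul_le_mul_of_nonpos_left hyτ (by linarith [Real.pi_pos])) hh.le

lemma sum_range_le_norm_imAxis (ha : ∀ n, 0 ≤ a n)
    (hF : ∀ τ : ℍ, HasSum (fun n => (a n : ℂ) * qParam h τ ^ n) (F τ)) {y : ℝ} (hy : 0 < y)
    (M : ℕ) : ∑ n ∈ Finset.range M, a n * Real.exp (-2 * π * y / h) ^ n ≤ ‖F (imAxis y hy)‖ :=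
  (sum_le_hasSum _ (fun n _ => mul_nonneg (ha n) (by positivity)) (hasSum_re_imAxis hF hy)).trans
    (re_le_norm _)

lemma apply_natCast_mul_vadd (hF : ∀ τ : ℍ, HasSum (fun n => (a n : ℂ) * qParam h τ ^ n) (F τ))
    (hh : h ≠ 0) (m : ℕ) (τ : ℍ) : F ((m * h : ℝ) +ᵥ τ) = F τ := by
  have hshift := hF ((m * h : ℝ) +ᵥ τ)
  rw [coe_vadd, add_comm, qParam_add_natCast_mul hh] at hshift
  exact hshift.unique (hF τ)

lemma tendsto_tsum_comap_coe_nhds_zero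
    (hF : ∀ τ : ℍ, HasSum (fun n => (a n : ℂ) * qParam h τ ^ n) (F τ)) (hh : 0 < h)
    (ha : Summable fun n => |a n|) :
    Tendsto F (comap ((↑) : ℍ → ℂ) (𝓝 0)) (𝓝 (∑' n, (a n : ℂ))) := by
  have hG := continuousOn_tsum_mul_pow_closedBall (c := fun n => (a n : ℂ)) (by simpa using ha)
  have hq : Tendsto (fun τ : ℍ => qParam h τ) (comap ((↑) : ℍ → ℂ) (𝓝 0))
      (𝓝[Metric.closedBall 0 1] 1) := by
    refine tendsto_nhdsWithin_iff.2 ⟨?_, Eventually.of_forall fun τ => ?_⟩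
    · have hq0 : qParam h 0 = 1 := by simp [qParam]
      exact hq0 ▸ ((continuous_qParam (h := h)).tendsto 0).comp tendsto_comap
    · simpa using (norm_qParam_lt_one hh τ.2).le
  have hlim := (hG 1 (by simp)).tendsto.comp hq
  simp only [one_pow, mul_one] at hlim
  exact hlim.congr fun τ => (hF τ).tsum_eq

lemma coeff_eq_zero_of_forall_eq (ha : ∀ n, 0 ≤ a n)
    (hF : ∀ τ : ℍ, HasSum (fun n => (a n : ℂ) * qParam h τ ^ n) (F τ)) (hh : 0 < h)
    (hconst : ∀ τ₁ τ₂, F τ₁ = F τ₂) {n : ℕ} (hn : n ≠ 0) : a n = 0 := by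
  have h12 := hasSum_re_imAxis hF one_pos
  rw [hconst (imAxis 1 one_pos) (imAxis 2 two_pos)] at h12
  refine eq_zero_of_hasSum_mul_pow_eq ha (Real.exp_pos _).le ?_ (hasSum_re_imAxis hF two_pos)
    h12 hn
  rw [Real.exp_lt_exp]
  exact div_lt_div_of_pos_right (by linarith [Real.pi_pos]) hh

end QExpansion

section VectorValued

variable {ι : Type*} [Fintype ι] {F : ι → ℍ → ℂ} {a : ι → ℕ → ℝ} {h : ι → ℝ}
  {M : Matrix ι ι ℂ}

lemma norm_apply_S_smul_le (ha : ∀ i n, 0 ≤ a i n) (hh : ∀ i, 0 < h i)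
    (hF : ∀ i (τ : ℍ), HasSum (fun n => (a i n : ℂ) * qParam (h i) τ ^ n) (F i τ))
    (hS : ∀ τ i, F i (ModularGroup.S • τ) = ∑ j, M i j * F j τ) (i : ι) {τ : ℍ}
    (hτ : 1 ≤ τ.im) :
    ‖F i (ModularGroup.S • τ)‖ ≤ ∑ j, ‖M i j‖ * (F j (imAxis 1 one_pos)).re := by
  rw [hS]
  refine (norm_sum_le _ _).trans (Finset.sum_le_sum fun j _ => ?_)
  rw [norm_mul]
  exact mul_le_mul_of_nonneg_left (norm_le_re_imAxis (ha j) (hF j) (hh j) one_pos hτ)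
    (norm_nonneg _)

lemma summable_coeff_of_S_smul (ha : ∀ i n, 0 ≤ a i n) (hh : ∀ i, 0 < h i)
    (hF : ∀ i (τ : ℍ), HasSum (fun n => (a i n : ℂ) * qParam (h i) τ ^ n) (F i τ))
    (hS : ∀ τ i, F i (ModularGroup.S • τ) = ∑ j, M i j * F j τ) (i : ι) : Summable (a i) := by
  have hx : Tendsto (fun t : ℝ => Real.exp (-2 * π * t / h i)) (𝓝[>] 0) (𝓝 1) := by
    have hcont : Continuous fun t : ℝ => Real.exp (-2 * π * t / h i) := by fun_prop
    simpa using (hcont.tendsto 0).mono_left nhdsWithin_le_nhds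
  refine summable_of_eventually_sum_range_mul_pow_le (ha i)
    (C := ∑ j, ‖M i j‖ * (F j (imAxis 1 one_pos)).re) hx ?_
  filter_upwards [Ioc_mem_nhdsGT one_pos] with t ht m
  refine (sum_range_le_norm_imAxis (ha i) (hF i) ht.1 m).trans ?_
  rw [imAxis_eq_S_smul]
  exact norm_apply_S_smul_le ha hh hF hS i (by rw [im_imAxis]; exact one_le_inv_iff₀.2 ht)

lemma eq_sum_mul_tsum_of_S_smul (hh : ∀ i, 0 < h i)
    (hF : ∀ i (τ : ℍ), HasSum (fun n => (a i n : ℂ) * qParam (h i) τ ^ n) (F i τ))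
    (hS : ∀ τ i, F i (ModularGroup.S • τ) = ∑ j, M i j * F j τ)
    (hs : ∀ i, Summable fun n => |a i n|) (i : ι) (τ : ℍ) :
    F i τ = ∑ j, M i j * ∑' n, (a j n : ℂ) := by
  set τ' : ℕ → ℍ := fun m => (m * h i : ℝ) +ᵥ τ
  have hτ' : Tendsto (fun m => ModularGroup.S • τ' m) atTop (comap ((↑) : ℍ → ℂ) (𝓝 0)) :=
    (tendsto_S_smul_vadd_atTop τ).comp (tendsto_natCast_atTop_atTop.atTop_mul_const (hh i))
  have hlim : Tendsto (fun m => ∑ j, M i j * F j (ModularGroup.S • τ' m)) atTop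
      (𝓝 (∑ j, M i j * ∑' n, (a j n : ℂ))) :=
    tendsto_finsetSum _ fun j _ =>
      ((tendsto_tsum_comap_coe_nhds_zero (hF j) (hh j) (hs j)).comp hτ').const_mul _
  refine tendsto_nhds_unique (tendsto_const_nhds.congr fun m => ?_) hlim
  rw [← hS, modular_S_smul_S_smul]
  exact (apply_natCast_mul_vadd (hF i) (hh i).ne' m τ).symm

end VectorValued

theorem holomorphic_vvmf_weight_zero_nonneg_coeffs_constant_general
    (r : ℕ)
    (ρ : Matrix.SpecialLinearGroup (Fin 2) ℤ →* Matrix.GeneralLinearGroup (Fin r) ℂ)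
    (F : Fin r → ℍ → ℂ) (N : Fin r → ℕ+) (a : Fin r → ℕ → ℝ)
    (hnonneg : ∀ i n, 0 ≤ a i n)
    (hexp : ∀ (i : Fin r) (τ : ℍ),
      HasSum (fun n : ℕ =>
        (a i n : ℂ) * Complex.exp (2 * π * Complex.I * (n : ℂ) * (τ : ℂ) / (N i : ℂ))) (F i τ))
    (htrans : ∀ (γ : Matrix.SpecialLinearGroup (Fin 2) ℤ) (τ : ℍ) (i : Fin r),
      (((γ : Matrix (Fin 2) (Fin 2) ℤ) 1 0 : ℂ) * (τ : ℂ)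
          + ((γ : Matrix (Fin 2) (Fin 2) ℤ) 1 1 : ℂ)) ^ (-((0 : ℝ) : ℂ)) * F i (γ • τ)
        = ∑ j : Fin r, ((ρ γ : Matrix (Fin r) (Fin r) ℂ) i j) * F j τ) :
    (∀ (i : Fin r) (τ₁ τ₂ : ℍ), F i τ₁ = F i τ₂) ∧
    (∀ (i : Fin r) (n : ℕ), 1 ≤ n → a i n = 0) := by
  have hN : ∀ i, 0 < ((N i : ℕ) : ℝ) := fun i => by positivity
  have hq : ∀ i (τ : ℍ), HasSum (fun n => (a i n : ℂ) * qParam (N i : ℕ) τ ^ n) (F i τ) :=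
    fun i τ => by simpa only [← exp_eq_qParam_pow, Complex.ofReal_natCast] using hexp i τ
  have hS : ∀ τ i, F i (ModularGroup.S • τ) =
      ∑ j, (ρ ModularGroup.S : Matrix (Fin r) (Fin r) ℂ) i j * F j τ := fun τ i => by
    simpa using htrans ModularGroup.S τ i
  have hs : ∀ i, Summable fun n => |a i n| := fun i =>
    (summable_coeff_of_S_smul hnonneg hN hq hS i).abs
  have hconst : ∀ i τ₁ τ₂, F i τ₁ = F i τ₂ := fun i τ₁ τ₂ => by
    rw [eq_sum_mul_tsum_of_S_smul hN hq hS hs i τ₁, eq_sum_mul_tsum_of_S_smul hN hq hS hs i τ₂]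
  exact ⟨hconst, fun i n hn =>
    coeff_eq_zero_of_forall_eq (hnonneg i) (hq i) (hN i) (hconst i) (by omega)⟩

theorem holomorphic_vvmf_weight_zero_nonneg_coeffs_constant
    (r : ℕ) (hr : 0 < r)
    (ρ : Matrix.SpecialLinearGroup (Fin 2) ℤ →* Matrix.GeneralLinearGroup (Fin r) ℂ)
    (F : Fin r → ℍ → ℂ) (N : Fin r → ℕ+) (a : Fin r → ℕ → ℝ)
    (hnonneg : ∀ i n, 0 ≤ a i n)
    (hhol : ∀ i, MDifferentiable 𝓘(ℂ) 𝓘(ℂ) (F i))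
    (hexp : ∀ (i : Fin r) (τ : ℍ),
      HasSum (fun n : ℕ =>
        (a i n : ℂ) * Complex.exp (2 * π * Complex.I * (n : ℂ) * (τ : ℂ) / (N i : ℂ))) (F i τ))
    (htrans : ∀ (γ : Matrix.SpecialLinearGroup (Fin 2) ℤ) (τ : ℍ) (i : Fin r),
      (((γ : Matrix (Fin 2) (Fin 2) ℤ) 1 0 : ℂ) * (τ : ℂ)
          + ((γ : Matrix (Fin 2) (Fin 2) ℤ) 1 1 : ℂ)) ^ (-((0 : ℝ) : ℂ)) * F i (γ • τ)
        = ∑ j : Fin r, ((ρ γ : Matrix (Fin r) (Fin r) ℂ) i j) * F j τ) :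
    (∀ (i : Fin r) (τ₁ τ₂ : ℍ), F i τ₁ = F i τ₂) ∧
    (∀ (i : Fin r) (n : ℕ), 1 ≤ n → a i n = 0) :=
  holomorphic_vvmf_weight_zero_nonneg_coeffs_constant_general r ρ F N a hnonneg hexp htrans
end

section
/- Let F = (F_1, …, F_r) be a cuspidal vector-valued modular form of real weight k with respect to a representation ρ : SL(2,ℤ) → GL(r,ℂ), such that all Fourier coefficients a_i(n) of every component F_i are non-negative real numbers. Then F = 0, i.e. each component function F_i vanishes identically on ℍ. -/
/-! On the imaginary axis, `F i (I t)` is the series `∑ aᵢ(n) exp(-2πnt/Nᵢ)` of nonnegative reals: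
it is real, dominates each of its terms, and (as `aᵢ(0) = 0`) decays like `exp(-2πt/Nᵢ)` as
`t → ∞`. The transformation law for `S` writes `F i (I/t)` as `(I t)^k` times a combination of the
`F j (I t)`, so `F i (I t) → 0` also as `t → 0⁺`. But each term `aᵢ(n) exp(-2πnt/Nᵢ)` tends to
`aᵢ(n)` there, so all coefficients vanish. -/

open UpperHalfPlane Complex Matrix
open scoped Manifold Real
open Filter Topology

lemma hasSum_norm_of_hasSum_ofReal {ι : Type*} {f : ι → ℝ} {z : ℂ} (hf : 0 ≤ f)
    (h : HasSum (fun n => (f n : ℂ)) z) : HasSum f ‖z‖ := by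
  have hf' : HasSum f (∑' n, f n) := (Complex.summable_ofReal.mp h.summable).hasSum
  rw [h.unique (Complex.hasSum_ofReal.mpr hf'), Complex.norm_real,
    Real.norm_of_nonneg (tsum_nonneg hf)]
  exact hf'

lemma cexp_two_pi_I_mul_I_mul_div (n m : ℕ) (t : ℝ) :
    cexp (2 * π * Complex.I * n * (Complex.I * t) / m) = rexp (-(2 * π / m * n * t)) := by
  rw [Complex.ofReal_exp]
  congr 1
  push_cast
  linear_combination (2 * π * n * t / m : ℂ) * Complex.I_mul_I

section NonnegExpSeries

variable {a : ℕ → ℝ} {c : ℝ}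

lemma le_mul_exp_of_hasSum_of_coeff_zero (ha : 0 ≤ a) (ha0 : a 0 = 0) (hc : 0 ≤ c)
    {t₀ t s₀ s : ℝ} (ht : t₀ ≤ t) (h₀ : HasSum (fun n : ℕ => a n * rexp (-(c * n * t₀))) s₀)
    (h : HasSum (fun n : ℕ => a n * rexp (-(c * n * t))) s) :
    s ≤ s₀ * rexp (-(c * (t - t₀))) := by
  refine hasSum_le (fun n => ?_) h (h₀.mul_right _)
  rcases Nat.eq_zero_or_pos n with rfl | hn
  · simp [ha0]
  rw [mul_assoc (a n), ← Real.exp_add]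
  gcongr
  · exact ha n
  have hn : (1 : ℝ) ≤ n := by exact_mod_cast hn
  nlinarith [mul_nonneg (mul_nonneg hc (sub_nonneg.mpr ht)) (sub_nonneg.mpr hn)]

lemma eq_zero_of_hasSum_exp_of_tendsto_zero (ha : 0 ≤ a) {g : ℝ → ℝ}
    (hg : ∀ t > 0, HasSum (fun n : ℕ => a n * rexp (-(c * n * t))) (g t))
    (hlim : Tendsto g (𝓝[>] 0) (𝓝 0)) : a = 0 := by
  funext n
  have hterm : Tendsto (fun t : ℝ => a n * rexp (-(c * n * t))) (𝓝[>] 0) (𝓝 (a n)) := by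
    have : Continuous fun t : ℝ => a n * rexp (-(c * n * t)) := by fun_prop
    simpa using this.continuousWithinAt.tendsto (x := 0) (s := Set.Ioi 0)
  refine le_antisymm (le_of_tendsto_of_tendsto hterm hlim ?_) (ha n)
  filter_upwards [self_mem_nhdsWithin] with t ht
  exact le_hasSum (hg t ht) n fun m _ => mul_nonneg (ha m) (Real.exp_nonneg _)

end NonnegExpSeries

lemma tendsto_rpow_mul_sum_mul_exp_neg_atTop {ι : Type*} [Fintype ι] (k t₀ : ℝ) (c : ι → ℝ)
    (hc : ∀ j, 0 < c j) (C : ι → ℝ) :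
    Tendsto (fun t => t ^ k * ∑ j, C j * rexp (-(c j * (t - t₀)))) atTop (𝓝 0) := by
  simp_rw [Finset.mul_sum]
  rw [← Finset.sum_const_zero]
  refine tendsto_finsetSum _ fun j _ => ?_
  have := ((tendsto_rpow_mul_exp_neg_mul_atTop_nhds_zero k (c j) (hc j)).const_mul
    (C j * rexp (c j * t₀)))
  rw [mul_zero] at this
  refine this.congr fun t => ?_
  rw [mul_mul_mul_comm, ← Real.exp_add]
  ring_nf

lemma norm_le_rpow_mul_sum_of_cpow_neg_mul_eq {ι : Type*} [Fintype ι] {z w : ℂ} (hz : z ≠ 0)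
    (k : ℝ) (M v : ι → ℂ) (h : z ^ (-(k : ℂ)) * w = ∑ j, M j * v j) :
    ‖w‖ ≤ ‖z‖ ^ k * ∑ j, ‖M j‖ * ‖v j‖ := by
  have hzk : z ^ (k : ℂ) ≠ 0 := fun h0 => hz ((cpow_eq_zero_iff _ _).mp h0).1
  rw [cpow_neg, inv_mul_eq_iff_eq_mul₀ hzk] at h
  rw [h, norm_mul, norm_cpow_real]
  gcongr
  exact (norm_sum_le _ _).trans_eq (by simp_rw [norm_mul])

lemma ModularGroup.S_one_zero_mul_add_S_one_one (z : ℂ) :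
    ((ModularGroup.S : Matrix (Fin 2) (Fin 2) ℤ) 1 0 : ℂ) * z
      + ((ModularGroup.S : Matrix (Fin 2) (Fin 2) ℤ) 1 1 : ℂ) = z := by
  simp [ModularGroup.coe_S]

namespace UpperHalfPlane

lemma coe_ofComplex_I_mul {t : ℝ} (ht : 0 < t) :
    (ofComplex (Complex.I * t) : ℂ) = Complex.I * t := by
  rw [ofComplex_apply_of_im_pos (by simpa using ht)]

lemma modular_S_smul_ofComplex_I_mul {t : ℝ} (ht : 0 < t) :
    ModularGroup.S • ofComplex (Complex.I * t) = ofComplex (Complex.I * t⁻¹) := by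
  ext
  rw [modular_S_smul, coe_mk, coe_ofComplex_I_mul ht, coe_ofComplex_I_mul (inv_pos.mpr ht)]
  simp [inv_I, mul_comm]

end UpperHalfPlane

theorem cuspidal_vvmf_nonneg_coeffs_vanishes_general
    (r : ℕ) (k : ℝ)
    (ρ : Matrix.SpecialLinearGroup (Fin 2) ℤ →* Matrix.GeneralLinearGroup (Fin r) ℂ)
    (F : Fin r → ℍ → ℂ) (N : Fin r → ℕ+) (a : Fin r → ℕ → ℝ)
    (hnonneg : ∀ i n, 0 ≤ a i n)
    (hcusp : ∀ i, a i 0 = 0)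
    (hexp : ∀ (i : Fin r) (τ : ℍ),
      HasSum (fun n : ℕ =>
        (a i n : ℂ) * Complex.exp (2 * π * Complex.I * (n : ℂ) * (τ : ℂ) / (N i : ℂ))) (F i τ))
    (htrans : ∀ (γ : Matrix.SpecialLinearGroup (Fin 2) ℤ) (τ : ℍ) (i : Fin r),
      (((γ : Matrix (Fin 2) (Fin 2) ℤ) 1 0 : ℂ) * (τ : ℂ)
          + ((γ : Matrix (Fin 2) (Fin 2) ℤ) 1 1 : ℂ)) ^ (-(k : ℂ)) * F i (γ • τ)
        = ∑ j : Fin r, ((ρ γ : Matrix (Fin r) (Fin r) ℂ) i j) * F j τ) :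
    ∀ (i : Fin r) (τ : ℍ), F i τ = 0 := by
  have hseries (j : Fin r) (t : ℝ) (ht : 0 < t) : HasSum
      (fun n : ℕ => a j n * rexp (-(2 * π / N j * n * t))) ‖F j (ofComplex (Complex.I * t))‖ :=
    hasSum_norm_of_hasSum_ofReal (fun n => mul_nonneg (hnonneg j n) (Real.exp_nonneg _)) <| by
      simpa only [coe_ofComplex_I_mul ht, cexp_two_pi_I_mul_I_mul_div, ← ofReal_mul]
        using hexp j (ofComplex (Complex.I * t))
  have hdecay (j : Fin r) (t : ℝ) (ht : 1 ≤ t) : ‖F j (ofComplex (Complex.I * t))‖ ≤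
      ‖F j (ofComplex (Complex.I * 1))‖ * rexp (-(2 * π / N j * (t - 1))) :=
    le_mul_exp_of_hasSum_of_coeff_zero (hnonneg j) (hcusp j) (by positivity) ht
      (hseries j 1 one_pos) (hseries j t (by linarith))
  have hS (i : Fin r) (t : ℝ) (ht : 0 < t) : ‖F i (ofComplex (Complex.I * t⁻¹))‖ ≤
      t ^ k * ∑ j, ‖(ρ ModularGroup.S : Matrix (Fin r) (Fin r) ℂ) i j‖ *
        ‖F j (ofComplex (Complex.I * t))‖ := by
    have h := htrans ModularGroup.S (ofComplex (Complex.I * t)) i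
    rw [ModularGroup.S_one_zero_mul_add_S_one_one, coe_ofComplex_I_mul ht,
      modular_S_smul_ofComplex_I_mul ht] at h
    simpa [abs_of_pos ht] using
      norm_le_rpow_mul_sum_of_cpow_neg_mul_eq (by simp [ht.ne']) k _ _ h
  have hvanish (i : Fin r) :
      Tendsto (fun t : ℝ => ‖F i (ofComplex (Complex.I * t⁻¹))‖) atTop (𝓝 0) := by
    refine tendsto_of_tendsto_of_tendsto_of_le_of_le' tendsto_const_nhds
      (tendsto_rpow_mul_sum_mul_exp_neg_atTop k 1 (fun j => 2 * π / N j)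
        (fun j => by positivity) fun j => ‖(ρ ModularGroup.S : Matrix (Fin r) (Fin r) ℂ) i j‖ *
          ‖F j (ofComplex (Complex.I * 1))‖)
      (Eventually.of_forall fun t => norm_nonneg _) ?_
    filter_upwards [eventually_ge_atTop 1] with t ht
    refine (hS i t (by linarith)).trans <| mul_le_mul_of_nonneg_left
      (Finset.sum_le_sum fun j _ => ?_) (Real.rpow_nonneg (by linarith) k)
    rw [mul_assoc]
    exact mul_le_mul_of_nonneg_left (hdecay j t ht) (norm_nonneg _)
  have hzero (i : Fin r) : a i = 0 :=
    eq_zero_of_hasSum_exp_of_tendsto_zero (hnonneg i) (hseries i) <| by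
      simpa only [Function.comp_def, inv_inv] using (hvanish i).comp tendsto_inv_nhdsGT_zero
  intro i τ
  have h := hexp i τ
  simp only [hzero, Pi.zero_apply, ofReal_zero, zero_mul] at h
  exact h.unique hasSum_zero

theorem cuspidal_vvmf_nonneg_coeffs_vanishes
    (r : ℕ) (hr : 0 < r) (k : ℝ)
    (ρ : Matrix.SpecialLinearGroup (Fin 2) ℤ →* Matrix.GeneralLinearGroup (Fin r) ℂ)
    (F : Fin r → ℍ → ℂ) (N : Fin r → ℕ+) (a : Fin r → ℕ → ℝ)
    (hnonneg : ∀ i n, 0 ≤ a i n)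
    (hcusp : ∀ i, a i 0 = 0)
    (hhol : ∀ i, MDifferentiable 𝓘(ℂ) 𝓘(ℂ) (F i))
    (hexp : ∀ (i : Fin r) (τ : ℍ),
      HasSum (fun n : ℕ =>
        (a i n : ℂ) * Complex.exp (2 * π * Complex.I * (n : ℂ) * (τ : ℂ) / (N i : ℂ))) (F i τ))
    (htrans : ∀ (γ : Matrix.SpecialLinearGroup (Fin 2) ℤ) (τ : ℍ) (i : Fin r),
      (((γ : Matrix (Fin 2) (Fin 2) ℤ) 1 0 : ℂ) * (τ : ℂ)
          + ((γ : Matrix (Fin 2) (Fin 2) ℤ) 1 1 : ℂ)) ^ (-(k : ℂ)) * F i (γ • τ)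
        = ∑ j : Fin r, ((ρ γ : Matrix (Fin r) (Fin r) ℂ) i j) * F j τ) :
    ∀ (i : Fin r) (τ : ℍ), F i τ = 0 :=
  cuspidal_vvmf_nonneg_coeffs_vanishes_general r k ρ F N a hnonneg hcusp hexp htrans
end

section
/- Let G be an (additively written) abelian group and let c : G × G → ℂ^× be a function satisfying: (i) c(0,h) = 1 for all h ∈ G; (ii) c(g,h) = c(h,g) for all g,h ∈ G (symmetry); and (iii) the 2-cocycle identity c(g,h)·c(g+h,k) = c(h,k)·c(g,h+k) for all g,h,k ∈ G. Then there exists a function f : G → ℂ^× with f(0) = 1 such that c(g,h) = f(g)·f(h)·f(g+h)^{−1} for all g,h ∈ G; that is, every symmetric normalized 2-cocycle on G with values in ℂ^× is a coboundary. -/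
/-!
A symmetric normalized 2-cocycle `c : G → G → A` makes `G × A` an abelian group `E` under
`(g, a) + (h, b) = (g + h, a + b + c g h)`, an extension of `G` by `A`. A divisible group is an
injective `ℤ`-module, so the inclusion `a ↦ (0, a)` has a retraction `r : E →+ A`, and
`f g := r (g, 0)` satisfies `c g h = f g + f h - f (g + h)`. The group `ℂˣ` is divisible because
`ℂ` is algebraically closed.
-/

section

variable {G A : Type*} [AddCommGroup G] [AddCommGroup A]

structure IsSymmetricTwoCocycle (c : G → G → A) : Prop where
  map_zero_left : ∀ h, c 0 h = 0
  symm : ∀ g h, c g h = c h g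
  cocycle : ∀ g h k, c g h + c (g + h) k = c h k + c g (h + k)

@[ext]
structure CocycleExtension (c : G → G → A) where
  base : G
  fiber : A

namespace CocycleExtension

variable {c : G → G → A}

instance : Add (CocycleExtension c) :=
  ⟨fun x y => ⟨x.base + y.base, x.fiber + y.fiber + c x.base y.base⟩⟩
instance : Zero (CocycleExtension c) := ⟨⟨0, 0⟩⟩
instance : Neg (CocycleExtension c) := ⟨fun x => ⟨-x.base, -x.fiber - c x.base (-x.base)⟩⟩

@[simp] theorem base_add (x y : CocycleExtension c) : (x + y).base = x.base + y.base := rfl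
@[simp] theorem fiber_add (x y : CocycleExtension c) :
    (x + y).fiber = x.fiber + y.fiber + c x.base y.base := rfl
@[simp] theorem base_zero : (0 : CocycleExtension c).base = 0 := rfl
@[simp] theorem fiber_zero : (0 : CocycleExtension c).fiber = 0 := rfl
@[simp] theorem base_neg (x : CocycleExtension c) : (-x).base = -x.base := rfl
@[simp] theorem fiber_neg (x : CocycleExtension c) :
    (-x).fiber = -x.fiber - c x.base (-x.base) := rfl

end CocycleExtension

namespace IsSymmetricTwoCocycle

variable {c : G → G → A} (hc : IsSymmetricTwoCocycle c)
include hc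

theorem map_zero_right (g : G) : c g 0 = 0 := by rw [hc.symm, hc.map_zero_left]

abbrev addCommGroup : AddCommGroup (CocycleExtension c) :=
  { AddGroup.ofLeftAxioms
      (fun x y z => CocycleExtension.ext (add_assoc _ _ _) <| by
        simp only [CocycleExtension.fiber_add, CocycleExtension.base_add]
        linear_combination (norm := abel) hc.cocycle x.base y.base z.base)
      (fun x => CocycleExtension.ext (zero_add _) <| by simp [hc.map_zero_left])
      (fun x => CocycleExtension.ext (neg_add_cancel _) <| by
        simp only [CocycleExtension.fiber_add, CocycleExtension.fiber_neg,
          CocycleExtension.base_neg, CocycleExtension.fiber_zero, hc.symm (-x.base)]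
        abel) with
    add_comm := fun x y => CocycleExtension.ext (add_comm _ _) <| by
      simp only [CocycleExtension.fiber_add, hc.symm x.base, add_comm x.fiber] }

theorem exists_eq_coboundary [DivisibleBy A ℤ] :
    ∃ f : G → A, f 0 = 0 ∧ ∀ g h, c g h = f g + f h - f (g + h) := by
  let := hc.addCommGroup
  let ι : A →+ CocycleExtension c :=
    { toFun a := ⟨0, a⟩
      map_zero' := rfl
      map_add' a b := CocycleExtension.ext (add_zero 0).symm (by simp [hc.map_zero_left]) }
  have hι : Function.Injective ι := fun a b hab => congrArg CocycleExtension.fiber hab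
  obtain ⟨r, hr⟩ :=
    (Module.Baer.of_divisible A).extension_property_addMonoidHom ι hι (AddMonoidHom.id A)
  refine ⟨fun g => r ⟨g, 0⟩, r.map_zero, fun g h => ?_⟩
  have hsplit : (⟨g, 0⟩ + ⟨h, 0⟩ : CocycleExtension c) = ⟨g + h, 0⟩ + ι (c g h) :=
    CocycleExtension.ext (add_zero _).symm (by simp [ι, hc.map_zero_right])
  have hr_split := congrArg r hsplit
  rw [map_add, map_add, ← AddMonoidHom.comp_apply, hr, AddMonoidHom.id_apply] at hr_split
  rw [hr_split]
  abel

end IsSymmetricTwoCocycle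

end

theorem IsAlgClosed.pow_surjective_units {k : Type*} [Field k] [IsAlgClosed k] {n : ℕ}
    (hn : n ≠ 0) : Function.Surjective fun x : kˣ => x ^ n := fun x => by
  obtain ⟨z, hz⟩ := IsAlgClosed.exists_pow_nat_eq (x : k) (Nat.pos_of_ne_zero hn)
  have hz0 : z ≠ 0 := by
    rintro rfl
    exact x.ne_zero (by rw [← hz, zero_pow hn])
  exact ⟨Units.mk0 z hz0, Units.ext hz⟩

noncomputable instance {k : Type*} [Field k] [IsAlgClosed k] : DivisibleBy (Additive kˣ) ℤ :=
  letI : DivisibleBy (Additive kˣ) ℕ :=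
    divisibleByOfSMulRightSurj _ _ fun hn => IsAlgClosed.pow_surjective_units (k := k) hn
  AddGroup.divisibleByIntOfDivisibleByNat _

theorem symmetric_normalized_two_cocycle_is_coboundary
    (G : Type*) [AddCommGroup G] (c : G → G → ℂˣ)
    (hnorm : ∀ h : G, c 0 h = 1)
    (hsymm : ∀ g h : G, c g h = c h g)
    (hcocycle : ∀ g h k : G, c g h * c (g + h) k = c h k * c g (h + k)) :
    ∃ f : G → ℂˣ, f 0 = 1 ∧ ∀ g h : G, c g h = f g * f h * (f (g + h))⁻¹ := by
  have hc : IsSymmetricTwoCocycle fun g h => Additive.ofMul (c g h) :=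
    ⟨fun h => congrArg Additive.ofMul (hnorm h), fun g h => congrArg Additive.ofMul (hsymm g h),
      fun g h k => congrArg Additive.ofMul (hcocycle g h k)⟩
  obtain ⟨f, hf0, hf⟩ := hc.exists_eq_coboundary
  exact ⟨fun g => (f g).toMul, congrArg Additive.toMul hf0, fun g h => by
    simpa [div_eq_mul_inv] using congrArg Additive.toMul (hf g h)⟩
end

section
/- The unrestricted partition function p(n) grows faster than any polynomial: for every real number α and every real constant C > 0 there exists a natural number n such that p(n) > C·n^α. Equivalently, for no α does the bound p(n) = O(n^α) hold. -/
/- STATEMENT 8: The unrestricted partition function `p(n)` grows faster than any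
polynomial: for every real `α` and every `C > 0` there is an `n` with
`p(n) > C · n^α`.  Here `p(n) = Fintype.card (Nat.Partition n)` is the number of
partitions of `n`. -/

open Finset in
lemma two_pow_le_card_partition (k : ℕ) :
    2 ^ k ≤ Fintype.card (Nat.Partition ((k + 1) ^ 2)) := by
  classical
  set N := (k + 1) ^ 2 with hNdef
  have hsum : ∀ s : Finset ℕ, s ⊆ Finset.Icc 2 (k + 1) → s.sum id ≤ N := by
    intro s hs
    have h1 : s.sum id ≤ s.card • (k + 1) :=
      Finset.sum_le_card_nsmul s id (k + 1) fun x hx => (Finset.mem_Icc.mp (hs hx)).2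
    have h2 : s.card ≤ k := by
      have := Finset.card_le_card hs
      simpa [Nat.card_Icc] using this
    have : s.sum id ≤ k * (k + 1) := by
      calc s.sum id ≤ s.card * (k + 1) := by simpa [smul_eq_mul] using h1
        _ ≤ k * (k + 1) := Nat.mul_le_mul_right _ h2
    calc s.sum id ≤ k * (k + 1) := this
      _ ≤ N := by simp [hNdef]; nlinarith
  let e : (Finset.Icc 2 (k + 1) : Finset ℕ) ↪ ℕ := ⟨Subtype.val, Subtype.val_injective⟩
  have hmem : ∀ (t : Finset (Finset.Icc 2 (k + 1) : Finset ℕ)) (x : ℕ),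
      x ∈ t.map e → 2 ≤ x ∧ x ≤ k + 1 := by
    intro t x hx
    rcases Finset.mem_map.mp hx with ⟨y, _, rfl⟩
    exact Finset.mem_Icc.mp y.2
  have hsub : ∀ t : Finset (Finset.Icc 2 (k + 1) : Finset ℕ),
      t.map e ⊆ Finset.Icc 2 (k + 1) := by
    intro t x hx
    exact Finset.mem_Icc.mpr (hmem t x hx)
  let g : Finset (Finset.Icc 2 (k + 1) : Finset ℕ) → Nat.Partition N := fun t =>
    { parts := (t.map e).val + Multiset.replicate (N - (t.map e).sum id) 1
      parts_pos := by
        intro i hi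
        rcases Multiset.mem_add.mp hi with h | h
        · exact lt_of_lt_of_le (by norm_num) (hmem t i h).1
        · rw [Multiset.eq_of_mem_replicate h]; norm_num
      parts_sum := by
        rw [Multiset.sum_add, Multiset.sum_replicate, smul_eq_mul, mul_one]
        have hs : (t.map e).val.sum = (t.map e).sum id := by
          simp only [Finset.sum, Multiset.map_id]
        rw [hs]
        exact Nat.add_sub_cancel' (hsum _ (hsub t)) }
  have hginj : Function.Injective g := by
    intro t1 t2 h
    have hparts := congrArg Nat.Partition.parts h
    have hfil : ∀ t : Finset (Finset.Icc 2 (k + 1) : Finset ℕ),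
        ((t.map e).val + Multiset.replicate (N - (t.map e).sum id) 1).filter
          (fun x => 2 ≤ x) = (t.map e).val := by
      intro t
      rw [Multiset.filter_add]
      have h1 : (t.map e).val.filter (fun x => 2 ≤ x) = (t.map e).val :=
        Multiset.filter_eq_self.mpr fun x hx => (hmem t x hx).1
      have h2 : (Multiset.replicate (N - (t.map e).sum id) 1).filter
          (fun x => 2 ≤ x) = 0 := by
        rw [Multiset.filter_eq_nil]
        intro x hx
        rw [Multiset.eq_of_mem_replicate hx]
        omega
      rw [h1, h2, add_zero]
    have hparts' : (t1.map e).val + Multiset.replicate (N - (t1.map e).sum id) 1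
        = (t2.map e).val + Multiset.replicate (N - (t2.map e).sum id) 1 := hparts
    have hval : (t1.map e).val = (t2.map e).val := by
      have := congrArg (Multiset.filter (fun x => 2 ≤ x)) hparts'
      rwa [hfil t1, hfil t2] at this
    have : t1.map e = t2.map e := Finset.val_injective hval
    exact Finset.map_injective e this
  calc 2 ^ k = Fintype.card (Finset (Finset.Icc 2 (k + 1) : Finset ℕ)) := by
        rw [Fintype.card_finset, Fintype.card_coe, Nat.card_Icc]
        congr 1
    _ ≤ Fintype.card (Nat.Partition N) := Fintype.card_le_of_injective g hginj

theorem partition_function_superpolynomial_growth (α C : ℝ) (hC : 0 < C) :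
    ∃ n : ℕ, C * (n : ℝ) ^ α < (Fintype.card (Nat.Partition n) : ℝ) := by
  -- choose a natural exponent dominating 2α
  set m : ℕ := ⌈2 * α⌉₊ with hm
  -- polynomial is little-o of 2^k
  have hlo : (fun k : ℕ => ((k : ℝ) + 1) ^ m) =o[Filter.atTop]
      fun k : ℕ => (2 : ℝ) ^ k := by
    have h1 : (fun k : ℕ => ((k : ℝ)) ^ m) =o[Filter.atTop]
        fun k : ℕ => (2 : ℝ) ^ k :=
      isLittleO_pow_const_const_pow_of_one_lt m one_lt_two
    have h2 := h1.comp_tendsto (Filter.tendsto_add_atTop_nat 1)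
    simp only [Function.comp_def] at h2
    have h3 : (fun k : ℕ => ((k : ℝ) + 1) ^ m) =o[Filter.atTop]
        fun k : ℕ => (2 : ℝ) ^ (k + 1) := by
      convert h2 using 2 with k
      push_cast; ring
    calc (fun k : ℕ => ((k : ℝ) + 1) ^ m)
        =o[Filter.atTop] fun k : ℕ => (2 : ℝ) ^ (k + 1) := h3
      _ =O[Filter.atTop] fun k : ℕ => (2 : ℝ) ^ k := by
          apply Asymptotics.isBigO_of_le' (c := 2)
          intro k
          rw [Real.norm_eq_abs, Real.norm_eq_abs, abs_of_nonneg (by positivity),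
            abs_of_nonneg (by positivity), pow_succ]
          nlinarith [pow_pos (by norm_num : (0:ℝ) < 2) k]
  have hc : (0 : ℝ) < 1 / (2 * C) := by positivity
  have hev := hlo.def hc
  rw [Filter.eventually_atTop] at hev
  obtain ⟨K, hK⟩ := hev
  refine ⟨(K + 1) ^ 2, ?_⟩
  have hb : ((K : ℝ) + 1) ^ m ≤ 1 / (2 * C) * 2 ^ K := by
    have hb0 := hK K le_rfl
    rw [Real.norm_eq_abs, Real.norm_eq_abs] at hb0
    rw [abs_of_nonneg (by positivity : (0:ℝ) ≤ ((K : ℝ) + 1) ^ m),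
      abs_of_nonneg (by positivity : (0:ℝ) ≤ (2:ℝ) ^ K)] at hb0
    exact hb0
  -- bound the rpow by the natural power
  have hx1 : (1 : ℝ) ≤ (K : ℝ) + 1 := by
    have : (0 : ℝ) ≤ (K : ℝ) := Nat.cast_nonneg K
    linarith
  have hrpow : (((K + 1) ^ 2 : ℕ) : ℝ) ^ α ≤ ((K : ℝ) + 1) ^ m := by
    have hcast : (((K + 1) ^ 2 : ℕ) : ℝ) = ((K : ℝ) + 1) ^ (2 : ℕ) := by push_cast; ring
    rw [hcast, ← Real.rpow_natCast ((K : ℝ) + 1) 2, ← Real.rpow_mul (by linarith)]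
    calc ((K : ℝ) + 1) ^ ((2 : ℕ) * α) = ((K : ℝ) + 1) ^ (2 * α) := by norm_num
      _ ≤ ((K : ℝ) + 1) ^ (m : ℝ) :=
          Real.rpow_le_rpow_of_exponent_le hx1 (Nat.le_ceil _)
      _ = ((K : ℝ) + 1) ^ m := Real.rpow_natCast _ _
  have hcard : (2 : ℝ) ^ K ≤ (Fintype.card (Nat.Partition ((K + 1) ^ 2)) : ℝ) := by
    have := two_pow_le_card_partition K
    calc (2 : ℝ) ^ K = ((2 ^ K : ℕ) : ℝ) := by push_cast; ring
      _ ≤ _ := Nat.cast_le.mpr this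
  have hpos : (0 : ℝ) < 2 ^ K := by positivity
  calc C * (((K + 1) ^ 2 : ℕ) : ℝ) ^ α ≤ C * ((K : ℝ) + 1) ^ m := by
        exact mul_le_mul_of_nonneg_left hrpow hC.le
    _ ≤ C * (1 / (2 * C) * 2 ^ K) := mul_le_mul_of_nonneg_left hb hC.le
    _ = 2 ^ K / 2 := by field_simp
    _ < 2 ^ K := by linarith
    _ ≤ _ := hcard
end
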